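/- arXiv:1406.7047 — 3 statements merged into one kernel-verified Lean document; each statement's English description precedes it below -/
import Mathlib

section
/- Let K be a nonarchimedean local field with ring of integers O and uniformizer ϖ, let v_1,…,v_d be a basis of V = K^{⊕d}, and let σ ∈ A_i be an i-simplex of the apartment complex. Let σ̃ = {x_0 ⪇ x_1 ⪇ ⋯ ⪇ x_i} and σ̃' be any two small lifts of σ to Z^{⊕d}, and let (L_j)_{j∈Z} and (L'_j)_{j∈Z} be the associated periodic lattice chains. Then there exists l ∈ Z such that L'_j = L_{j+l} for all j ∈ Z; consequently the class ι_{v_1,…,v_d,i}(σ) ∈ 𝐁𝐓_i is independent of the choice of small lift. -/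
/-!
Encoding: a small lift of an `i`-simplex `σ ⊆ A_0 = ℤ^d/ℤ(1,…,1)`, together with
its periodic extension, is exactly a chain `x : ℤ → ℤ^d` with `x j ⪇ x (j+1)` and
`x (j+i+1) = x j + (1,…,1)` whose image in `A_0` is `σ`; that the two lifts are
lifts of the same `σ` is expressed by the equality of the ranges of `q ∘ x` and
`q ∘ x'`, where `q : ℤ^d → A_0` is the canonical surjection.
-/

/-- A (periodically extended) small lift: a strictly increasing chain of period
`c` (the number of vertices), i.e. `x_{j+c} = x_j + (1,…,1)`. -/
def IsSmallChain (d c : ℕ) (x : ℤ → (Fin d → ℤ)) : Prop :=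
  (∀ j : ℤ, x j < x (j + 1)) ∧ ∀ j : ℤ, x (j + (c : ℤ)) = x j + 1

/-- The canonical surjection `q : ℤ^d → A_0 = ℤ^d/ℤ(1,…,1)`. -/
def qA0 (d : ℕ) : (Fin d → ℤ) →+ (Fin d → ℤ) ⧸ AddSubgroup.zmultiples (1 : Fin d → ℤ) :=
  QuotientAddGroup.mk' _

/-- The lattice `L_j = O ϖ^{(x_j)_1} v_1 ⊕ ⋯ ⊕ O ϖ^{(x_j)_d} v_d` associated to a
small chain. -/
noncomputable def chainLattice (O K : Type) [CommRing O] [Field K] [Algebra O K]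
    (ϖ : O) (d : ℕ) (v : Fin d → (Fin d → K)) (x : ℤ → (Fin d → ℤ)) (j : ℤ) :
    Submodule O (Fin d → K) :=
  Submodule.span O (Set.range fun k : Fin d => (algebraMap O K ϖ) ^ (x j k) • v k)

/-!
A periodic small chain `x` is closed under adding multiples of `(1,…,1)`, so its range is the
full preimage of its image in `A₀`. Hence every vertex of a second chain `x'` with the same image
is a vertex of `x`, say `x' j = x (f j)`. The reindexing `f : ℤ → ℤ` is strictly increasing and
commutes with the shift by the period `c`, so `j ↦ f j - j` is monotone and `c`-periodic, hence
constant: `f` is a translation, and so is the induced reindexing of the lattice chains.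
-/

theorem Int.eq_add_apply_zero_of_strictMono_of_add_period {f : ℤ → ℤ} (hf : StrictMono f)
    {c : ℤ} (hc : 0 < c) (hper : ∀ j, f (j + c) = f j + c) (j : ℤ) : f j = j + f 0 := by
  have hg : Monotone fun j => f j - j :=
    monotone_int_of_le_succ fun j => by have := hf (lt_add_one j); omega
  have hg_periodic : Function.Periodic (fun j => f j - j) 1 := fun j =>
    le_antisymm
      (calc f (j + 1) - (j + 1) ≤ f (j + c) - (j + c) := hg (by omega)
        _ = f j - j := by rw [hper]; ring)
      (hg (by omega))
  have := hg_periodic.int_mul_eq j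
  simp only [Int.cast_id, mul_one] at this
  omega

namespace IsSmallChain

variable {d c : ℕ} {x x' : ℤ → Fin d → ℤ}

theorem strictMono (hx : IsSmallChain d c x) : StrictMono x :=
  strictMono_int_of_lt_succ hx.1

theorem apply_add_mul (hx : IsSmallChain d c x) (j m : ℤ) :
    x (j + m * c) = x j + m • (1 : Fin d → ℤ) := by
  induction m using Int.induction_on with
  | zero => simp
  | succ m ih => rw [add_mul, one_mul, ← add_assoc, hx.2, ih, add_smul, one_smul, add_assoc]
  | pred m ih =>
    have h := hx.2 (j + (-(m : ℤ) - 1) * c)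
    rw [show j + (-(m : ℤ) - 1) * c + c = j + -(m : ℤ) * c by ring, ih] at h
    rw [sub_smul, one_smul, ← add_sub_assoc]
    exact eq_sub_of_add_eq h.symm

theorem exists_eq_of_qA0_eq (hx : IsSmallChain d c x) {y : Fin d → ℤ} {t : ℤ}
    (h : qA0 d (x t) = qA0 d y) : ∃ s, y = x s := by
  obtain ⟨m, hm⟩ := AddSubgroup.mem_zmultiples_iff.mp (QuotientAddGroup.eq.mp h)
  exact ⟨t + m * c, by rw [hx.apply_add_mul, hm, add_neg_cancel_left]⟩

theorem exists_shift_of_range_qA0_eq (hc : 0 < c) (hx : IsSmallChain d c x)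
    (hx' : IsSmallChain d c x')
    (himg : Set.range (fun j => qA0 d (x j)) = Set.range (fun j => qA0 d (x' j))) :
    ∃ l : ℤ, ∀ j, x' j = x (j + l) := by
  have hvertex : ∀ j, ∃ s, x' j = x s := fun j => by
    obtain ⟨t, ht⟩ : qA0 d (x' j) ∈ Set.range (fun j => qA0 d (x j)) := himg ▸ ⟨j, rfl⟩
    exact hx.exists_eq_of_qA0_eq ht
  choose f hf using hvertex
  have hf_mono : StrictMono f := fun a b hab => by
    simpa only [hf, hx.strictMono.lt_iff_lt] using hx'.strictMono hab
  have hf_per : ∀ j, f (j + c) = f j + c := fun j =>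
    hx.strictMono.injective (by rw [← hf, hx'.2, hf, ← hx.2])
  refine ⟨f 0, fun j => ?_⟩
  rw [hf, Int.eq_add_apply_zero_of_strictMono_of_add_period hf_mono (by omega) hf_per j]

end IsSmallChain

theorem statement3_general (O : Type) [CommRing O]
    (K : Type) [Field K] [Algebra O K]
    (ϖ : O)
    (d : ℕ)
    (v : Fin d → (Fin d → K))
    (i : ℕ)
    (x x' : ℤ → (Fin d → ℤ))
    (hx : IsSmallChain d (i + 1) x) (hx' : IsSmallChain d (i + 1) x')
    -- `x` and `x'` are small lifts of the same simplex `σ ∈ A_i`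
    (himg : Set.range (fun j : ℤ => qA0 d (x j)) =
      Set.range (fun j : ℤ => qA0 d (x' j))) :
    ∃ l : ℤ, ∀ j : ℤ,
      chainLattice O K ϖ d v x' j = chainLattice O K ϖ d v x (j + l) := by
  obtain ⟨l, hl⟩ := IsSmallChain.exists_shift_of_range_qA0_eq i.succ_pos hx hx' himg
  exact ⟨l, fun j => by rw [chainLattice, chainLattice, hl]⟩

/-- STATEMENT 3. -/
theorem statement3 (O : Type) [CommRing O] [IsDomain O] [IsDiscreteValuationRing O]
    [IsAdicComplete (IsLocalRing.maximalIdeal O) O]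
    (K : Type) [Field K] [Algebra O K] [IsFractionRing O K]
    [Finite (IsLocalRing.ResidueField O)]
    (ϖ : O) (hϖ : Irreducible ϖ)
    (d : ℕ) (hd : 1 ≤ d)
    (v : Fin d → (Fin d → K))
    (hv : ∃ b : Module.Basis (Fin d) K (Fin d → K), ∀ k, b k = v k)
    (i : ℕ)
    (x x' : ℤ → (Fin d → ℤ))
    (hx : IsSmallChain d (i + 1) x) (hx' : IsSmallChain d (i + 1) x')
    -- `x` and `x'` are small lifts of the same simplex `σ ∈ A_i`
    (himg : Set.range (fun j : ℤ => qA0 d (x j)) =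
      Set.range (fun j : ℤ => qA0 d (x' j))) :
    ∃ l : ℤ, ∀ j : ℤ,
      chainLattice O K ϖ d v x' j = chainLattice O K ϖ d v x (j + l) :=
  statement3_general O K ϖ d v i x x' hx hx' himg
end

section
/- Let K be a nonarchimedean local field with absolute value |·| and residue field of cardinality q, let V = K^{⊕d} and V* = Hom_K(V, K), and let v_0,…,v_r ∈ V∖{0}. For (t_0,…,t_r) ∈ Δ_r and f ∈ V*, set s(v_0,…,v_r)(t_0,…,t_r)(f) = sup_{0≤i≤r} |f(v_i)|·q^{−1/t_i}, where q^{−1/t_i} is interpreted as 0 when t_i = 0. Then s(v_0,…,v_r)(t_0,…,t_r) is a semi-norm on V* for every (t_0,…,t_r) ∈ Δ_r, and the resulting map s(v_0,…,v_r) : Δ_r → S' is continuous. -/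
/-!
Each `s(v)(t)` is a finite supremum of the functionals `f ↦ |f(v_i)| · q^{-1/t_i}`, each of
which is homogeneous and ultrametric, so the supremum is a semi-norm; it is nonzero because
some `t_i` is positive and a coordinate functional does not vanish on `v_i ≠ 0`. For
continuity it suffices, pointwise in `f`, that `s ↦ q^{-1/s}` (extended by `0` at `0`) is
continuous on `[0, ∞)`, which at `0` is the limit `q^{-1/s} → 0` as `s → 0⁺` for `q > 1`.
-/

/-- The function `s(v_0,…,v_r)(t) : V* → ℝ` of the paper. -/
noncomputable def sFun {K : Type} [Field K] (abv : AbsoluteValue K ℝ) (q : ℕ)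
    {d r : ℕ} (v : Fin (r + 1) → (Fin d → K)) (t : Fin (r + 1) → ℝ)
    (f : (Fin d → K) →ₗ[K] K) : ℝ :=
  Finset.univ.sup' ⟨0, Finset.mem_univ 0⟩ fun i : Fin (r + 1) =>
    abv (f (v i)) * (if t i = 0 then 0 else (q : ℝ) ^ (-1 / t i))

open Filter Topology Set

noncomputable def negInvPow (b s : ℝ) : ℝ :=
  if s = 0 then 0 else b ^ (-1 / s)

section negInvPow

variable {b : ℝ}

lemma negInvPow_nonneg (hb : 0 ≤ b) (s : ℝ) : 0 ≤ negInvPow b s := by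
  unfold negInvPow
  split_ifs
  · exact le_rfl
  · exact Real.rpow_nonneg hb _

lemma negInvPow_pos (hb : 0 < b) {s : ℝ} (hs : s ≠ 0) : 0 < negInvPow b s := by
  rw [negInvPow, if_neg hs]
  exact Real.rpow_pos_of_pos hb _

lemma tendsto_negInvPow_nhdsGT_zero (hb : 1 < b) :
    Tendsto (negInvPow b) (𝓝[>] 0) (𝓝 0) := by
  have h_exp : Tendsto (fun s : ℝ => -1 / s) (𝓝[>] 0) atBot := by
    simpa only [neg_div, one_div, Function.comp_def] using
      tendsto_neg_atTop_atBot.comp tendsto_inv_nhdsGT_zero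
  refine ((tendsto_rpow_atBot_of_base_gt_one b hb).comp h_exp).congr' ?_
  filter_upwards [self_mem_nhdsWithin] with s hs
  simp [negInvPow, (mem_Ioi.mp hs).ne']

lemma continuousOn_negInvPow (hb : 1 < b) : ContinuousOn (negInvPow b) (Ici 0) := by
  intro s hs
  rcases (mem_Ici.mp hs).eq_or_lt with rfl | hs
  · rw [← continuousWithinAt_Ioi_iff_Ici, ContinuousWithinAt, negInvPow, if_pos rfl]
    exact tendsto_negInvPow_nhdsGT_zero hb
  · have h_rpow : ContinuousAt (fun s : ℝ => b ^ (-1 / s)) s :=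
      continuousAt_const.rpow (continuousAt_const.div continuousAt_id hs.ne')
        (Or.inl (by positivity))
    refine (h_rpow.congr ?_).continuousWithinAt
    filter_upwards [eventually_gt_nhds hs] with x hx
    simp [negInvPow, hx.ne']

end negInvPow

section sFun

variable {K : Type} [Field K] {abv : AbsoluteValue K ℝ} {q : ℕ} {d r : ℕ}
  {v : Fin (r + 1) → (Fin d → K)} {t : Fin (r + 1) → ℝ}

lemma sFun_eq_sup' (f : (Fin d → K) →ₗ[K] K) :
    sFun abv q v t f =
      Finset.univ.sup' Finset.univ_nonempty fun i => abv (f (v i)) * negInvPow q (t i) :=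
  rfl

lemma le_sFun (f : (Fin d → K) →ₗ[K] K) (i : Fin (r + 1)) :
    abv (f (v i)) * negInvPow q (t i) ≤ sFun abv q v t f :=
  Finset.le_sup' (fun i => abv (f (v i)) * negInvPow q (t i)) (Finset.mem_univ i)

lemma sFun_nonneg (f : (Fin d → K) →ₗ[K] K) : 0 ≤ sFun abv q v t f :=
  (mul_nonneg (abv.nonneg _) (negInvPow_nonneg q.cast_nonneg _)).trans (le_sFun f 0)

lemma sFun_smul (c : K) (f : (Fin d → K) →ₗ[K] K) :
    sFun abv q v t (c • f) = abv c * sFun abv q v t f := by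
  simp only [sFun_eq_sup', Finset.mul₀_sup' (abv.nonneg c), LinearMap.smul_apply, smul_eq_mul,
    abv.map_mul, mul_assoc]

lemma sFun_add_le (habv : ∀ x y : K, abv (x + y) ≤ max (abv x) (abv y))
    (f g : (Fin d → K) →ₗ[K] K) :
    sFun abv q v t (f + g) ≤ max (sFun abv q v t f) (sFun abv q v t g) := by
  refine Finset.sup'_le _ _ fun i _ => ?_
  calc abv ((f + g) (v i)) * negInvPow q (t i)
      ≤ max (abv (f (v i))) (abv (g (v i))) * negInvPow q (t i) :=
        mul_le_mul_of_nonneg_right (habv _ _) (negInvPow_nonneg q.cast_nonneg _)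
    _ = max (abv (f (v i)) * negInvPow q (t i)) (abv (g (v i)) * negInvPow q (t i)) :=
        max_mul_of_nonneg _ _ (negInvPow_nonneg q.cast_nonneg _)
    _ ≤ max (sFun abv q v t f) (sFun abv q v t g) := max_le_max (le_sFun f i) (le_sFun g i)

lemma exists_sFun_ne_zero (hq : 0 < q) (hv : ∀ i, v i ≠ 0) {i : Fin (r + 1)} (hi : t i ≠ 0) :
    ∃ f : (Fin d → K) →ₗ[K] K, sFun abv q v t f ≠ 0 := by
  obtain ⟨j, hj⟩ := Function.ne_iff.mp (hv i)
  refine ⟨LinearMap.proj j, (lt_of_lt_of_le ?_ (le_sFun _ i)).ne'⟩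
  exact mul_pos (abv.pos hj) (negInvPow_pos (Nat.cast_pos.mpr hq) hi)

lemma continuousOn_sFun (hq : 1 < q) (f : (Fin d → K) →ₗ[K] K) :
    ContinuousOn (fun t => sFun abv q v t f) {t | ∀ i, 0 ≤ t i} := by
  refine ContinuousOn.finset_sup'_apply Finset.univ_nonempty fun i _ => ?_
  exact continuousOn_const.mul ((continuousOn_negInvPow (Nat.one_lt_cast.mpr hq)).comp
    (continuous_apply i).continuousOn fun t ht => ht i)

end sFun

theorem statement12_general (K : Type) [Field K] (abv : AbsoluteValue K ℝ)
    -- the absolute value is nonarchimedean …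
    (habv : ∀ x y : K, abv (x + y) ≤ max (abv x) (abv y))
    -- … and discrete, with value group generated by the residue cardinality `q > 1`
    (q : ℕ) (hq : 1 < q)
    (d r : ℕ) (v : Fin (r + 1) → (Fin d → K)) (hv : ∀ i, v i ≠ 0) :
    -- (1) for every `t ∈ Δ_r`, `s(v_0,…,v_r)(t)` is a semi-norm on `V*`:
    (∀ t ∈ stdSimplex ℝ (Fin (r + 1)),
      (∀ f : (Fin d → K) →ₗ[K] K, 0 ≤ sFun abv q v t f) ∧
      (∀ (c : K) (f : (Fin d → K) →ₗ[K] K),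
        sFun abv q v t (c • f) = abv c * sFun abv q v t f) ∧
      (∀ f g : (Fin d → K) →ₗ[K] K,
        sFun abv q v t (f + g) ≤ max (sFun abv q v t f) (sFun abv q v t g)) ∧
      (∃ f : (Fin d → K) →ₗ[K] K, sFun abv q v t f ≠ 0)) ∧
    -- (2) the map `Δ_r → S'`, `t ↦ s(v_0,…,v_r)(t)`, is continuous for the topology
    -- of pointwise convergence on semi-norms (i.e. the product topology on `V* → ℝ`):
    Continuous (fun t : stdSimplex ℝ (Fin (r + 1)) =>
      (fun f : (Fin d → K) →ₗ[K] K => sFun abv q v t.1 f)) := by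
  refine ⟨fun t ht => ⟨sFun_nonneg, sFun_smul, sFun_add_le habv, ?_⟩, ?_⟩
  · obtain ⟨i, -, hi⟩ : ∃ i ∈ Finset.univ, t i ≠ 0 :=
      Finset.exists_ne_zero_of_sum_ne_zero (ht.2.symm ▸ one_ne_zero)
    exact exists_sFun_ne_zero (Nat.zero_lt_of_lt hq) hv hi
  · exact continuous_pi fun f =>
      (continuousOn_sFun hq f).comp_continuous continuous_subtype_val fun t => t.2.1

theorem statement12 (K : Type) [Field K] (abv : AbsoluteValue K ℝ)
    -- the absolute value is nonarchimedean …
    (habv : ∀ x y : K, abv (x + y) ≤ max (abv x) (abv y))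
    -- … and discrete, with value group generated by the residue cardinality `q > 1`
    (q : ℕ) (hq : 1 < q)
    (hdisc : ∀ x : K, x ≠ 0 → ∃ n : ℤ, abv x = (q : ℝ) ^ n)
    (d r : ℕ) (v : Fin (r + 1) → (Fin d → K)) (hv : ∀ i, v i ≠ 0) :
    -- (1) for every `t ∈ Δ_r`, `s(v_0,…,v_r)(t)` is a semi-norm on `V*`:
    (∀ t ∈ stdSimplex ℝ (Fin (r + 1)),
      (∀ f : (Fin d → K) →ₗ[K] K, 0 ≤ sFun abv q v t f) ∧
      (∀ (c : K) (f : (Fin d → K) →ₗ[K] K),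
        sFun abv q v t (c • f) = abv c * sFun abv q v t f) ∧
      (∀ f g : (Fin d → K) →ₗ[K] K,
        sFun abv q v t (f + g) ≤ max (sFun abv q v t f) (sFun abv q v t g)) ∧
      (∃ f : (Fin d → K) →ₗ[K] K, sFun abv q v t f ≠ 0)) ∧
    -- (2) the map `Δ_r → S'`, `t ↦ s(v_0,…,v_r)(t)`, is continuous for the topology
    -- of pointwise convergence on semi-norms (i.e. the product topology on `V* → ℝ`):
    Continuous (fun t : stdSimplex ℝ (Fin (r + 1)) =>
      (fun f : (Fin d → K) →ₗ[K] K => sFun abv q v t.1 f)) :=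
  statement12_general K abv habv q hq d r v hv
end

section
/- Fix integers d ≥ 1 and e ≥ 1 and a real number α > 0. Let P^{(α)} be the set of functions p : {0,1,…,d} → Z with p(0) = 0 satisfying 0 ≤ 2p(i) − p(i−1) − p(i+1) ≤ α for all 1 ≤ i ≤ d−1. Let Z act on P^{(α)} by (a·p)(i) = p(i) + a·e·i for a ∈ Z. Then the quotient P^{(α)}/Z is a finite set. -/
/-!
STATEMENT 15: Fix `d ≥ 1`, `e ≥ 1` and a real `α > 0`.  Let `P^{(α)}` be the set of
functions `p : {0,…,d} → ℤ` with `p 0 = 0` and `0 ≤ 2p(i) − p(i−1) − p(i+1) ≤ α`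
for `1 ≤ i ≤ d−1`.  Let `ℤ` act by `(a·p)(i) = p(i) + a·e·i`.  Then `P^{(α)}/ℤ` is finite.
-/

/-- The set `P^{(α)}` of integer-valued convex polygons on `{0,…,d}` with `p 0 = 0`
and second differences bounded by `α`. -/
def PolySet (d : ℕ) (α : ℝ) : Type :=
  {p : Fin (d + 1) → ℤ // p 0 = 0 ∧
    ∀ (i : ℕ) (_h1 : 1 ≤ i) (_h2 : i ≤ d - 1),
      0 ≤ 2 * p ⟨i, by omega⟩ - p ⟨i - 1, by omega⟩ - p ⟨i + 1, by omega⟩ ∧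
      ((2 * p ⟨i, by omega⟩ - p ⟨i - 1, by omega⟩ - p ⟨i + 1, by omega⟩ : ℤ) : ℝ) ≤ α}

/-- The equivalence relation on `P^{(α)}` induced by the `ℤ`-action
`(a·p)(i) = p(i) + a·e·i`. -/
def polyRel (d : ℕ) (e : ℕ) (α : ℝ) (p q : PolySet d α) : Prop :=
  ∃ a : ℤ, ∀ i : Fin (d + 1), q.1 i = p.1 i + a * (e : ℤ) * (i : ℕ)

theorem polyRel_equivalence (d e : ℕ) (α : ℝ) : Equivalence (polyRel d e α) := by
  constructor
  · intro p; exact ⟨0, fun i => by ring⟩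
  · rintro p q ⟨a, ha⟩
    exact ⟨-a, fun i => by rw [ha i]; ring⟩
  · rintro p q r ⟨a, ha⟩ ⟨b, hb⟩
    exact ⟨a + b, fun i => by rw [hb i, ha i]; ring⟩

/-- `P^{(α)}` with the `ℤ`-action equivalence relation. -/
def polySetoid (d e : ℕ) (α : ℝ) : Setoid (PolySet d α) :=
  ⟨polyRel d e α, polyRel_equivalence d e α⟩

def shiftPoly {d : ℕ} {α : ℝ} (p : PolySet d α) (c : ℤ) : PolySet d α :=
  ⟨fun i => p.1 i + c * (i : ℕ), by
    refine ⟨?_, fun i h1 h2 => ?_⟩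
    · show p.1 0 + c * ((0 : Fin (d+1)) : ℕ) = 0
      simp [p.2.1]
    obtain ⟨hl, hr⟩ := p.2.2 i h1 h2
    simp only [Fin.val_mk]
    have hc : ((i - 1 : ℕ) : ℤ) = (i : ℤ) - 1 := by omega
    constructor
    · rw [hc]; push_cast; linarith
    · rw [hc]; push_cast; push_cast at hr; linarith⟩

def canon {d : ℕ} (e : ℕ) {α : ℝ} (hd : 1 ≤ d) (p : PolySet d α) : PolySet d α :=
  shiftPoly p ((-(p.1 ⟨1, by omega⟩ / e)) * e)

lemma rel_canon {d e : ℕ} {α : ℝ} (hd : 1 ≤ d) (p : PolySet d α) :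
    polyRel d e α p (canon e hd p) :=
  ⟨-(p.1 ⟨1, by omega⟩ / e), fun i => rfl⟩

lemma canon_one {d : ℕ} (e : ℕ) {α : ℝ} (hd : 1 ≤ d) (p : PolySet d α) :
    (canon e hd p).1 ⟨1, by omega⟩ = p.1 ⟨1, by omega⟩ % e := by
  show p.1 ⟨1, by omega⟩ + (-(p.1 ⟨1, by omega⟩ / e)) * e * ((⟨1, by omega⟩ : Fin (d+1)) : ℕ) = _
  rw [Int.emod_def]
  simp only [Fin.val_mk, Nat.cast_one]
  ring

lemma canon_eq {d e : ℕ} {α : ℝ} (hd : 1 ≤ d) (he : 1 ≤ e) (p q : PolySet d α)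
    (h : polyRel d e α p q) : canon e hd p = canon e hd q := by
  obtain ⟨b, hb⟩ := h
  have he' : (e : ℤ) ≠ 0 := by positivity
  have hq1 : q.1 ⟨1, by omega⟩ = p.1 ⟨1, by omega⟩ + b * e := by
    have := hb ⟨1, by omega⟩
    simpa using this
  have hdiv : q.1 ⟨1, by omega⟩ / e = p.1 ⟨1, by omega⟩ / e + b := by
    rw [hq1, Int.add_mul_ediv_right _ _ he']
  apply Subtype.ext
  funext i
  show p.1 i + _ * (i:ℕ) = q.1 i + _ * (i:ℕ)
  rw [hb i, hdiv]
  ring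


lemma poly_bound {d e : ℕ} {α : ℝ} (hd : 1 ≤ d) (he : 1 ≤ e) (hα : 0 < α)
    (q : PolySet d α) (hq0 : 0 ≤ q.1 ⟨1, by omega⟩) (hq1 : q.1 ⟨1, by omega⟩ < e) :
    ∀ i : Fin (d + 1), -((d:ℤ) * e + d * d * ⌈α⌉) ≤ q.1 i ∧
      q.1 i ≤ (d:ℤ) * e + d * d * ⌈α⌉ := by
  set A : ℤ := ⌈α⌉ with hA
  have hA0 : 0 < A := by
    have : (0:ℝ) < (A:ℝ) := lt_of_lt_of_le hα (Int.le_ceil α)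
    exact_mod_cast this
  set D : ℕ → ℤ := fun i => if h : i ≤ d then q.1 ⟨i, by omega⟩ else 0 with hDdef
  have hD : ∀ i (h : i ≤ d), D i = q.1 ⟨i, by omega⟩ := fun i h => dif_pos h
  have hD0 : D 0 = 0 := by rw [hD 0 (by omega)]; simpa [Fin.mk_zero] using q.2.1
  have hD1l : 0 ≤ D 1 := by rw [hD 1 (by omega)]; exact hq0
  have hD1r : D 1 < e := by rw [hD 1 (by omega)]; exact hq1
  have hs : ∀ i, 1 ≤ i → i ≤ d - 1 →
      0 ≤ 2 * D i - D (i-1) - D (i+1) ∧ 2 * D i - D (i-1) - D (i+1) ≤ A := by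
    intro i h1 h2
    obtain ⟨hl, hr⟩ := q.2.2 i h1 h2
    rw [hD i (by omega), hD (i-1) (by omega), hD (i+1) (by omega)]
    refine ⟨hl, ?_⟩
    have := le_trans hr (Int.le_ceil α)
    exact_mod_cast this
  have hδ : ∀ i, i < d → D 1 - i * A ≤ D (i+1) - D i ∧ D (i+1) - D i ≤ D 1 := by
    intro i
    induction i with
    | zero => intro h; rw [hD0]; push_cast; constructor <;> linarith
    | succ i ih =>
      intro h
      obtain ⟨ihl, ihr⟩ := ih (by omega)
      obtain ⟨hl, hr⟩ := hs (i+1) (by omega) (by omega)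
      simp only [Nat.add_sub_cancel] at hl hr
      push_cast
      constructor <;> linarith
  have hQ : ∀ i, i ≤ d → -((i:ℤ) * i * A) ≤ D i ∧ D i ≤ (i:ℤ) * D 1 := by
    intro i
    induction i with
    | zero => intro _; rw [hD0]; simp
    | succ i ih =>
      intro h
      obtain ⟨ihl, ihr⟩ := ih (by omega)
      obtain ⟨dl, dr⟩ := hδ i (by omega)
      have hi : (0:ℤ) ≤ i := Int.natCast_nonneg i
      push_cast
      constructor
      · nlinarith
      · nlinarith
  intro i
  obtain ⟨l, r⟩ := hQ i.1 (by omega)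
  rw [hD i.1 (by omega)] at l r
  have hq : q.1 ⟨i.1, by omega⟩ = q.1 i := by rw [Fin.eta]
  rw [hq] at l r
  have hi : (i.1 : ℤ) ≤ d := by exact_mod_cast Nat.lt_succ_iff.mp i.isLt
  have hi0 : (0:ℤ) ≤ i.1 := Int.natCast_nonneg _
  have hdZ : (0:ℤ) ≤ d := Int.natCast_nonneg _
  have heZ : (0:ℤ) ≤ e := Int.natCast_nonneg _
  have h2 : (i.1:ℤ) * i.1 ≤ (d:ℤ) * d := mul_le_mul hi hi hi0 hdZ
  have h3 : (i.1:ℤ) * i.1 * A ≤ (d:ℤ) * d * A := mul_le_mul_of_nonneg_right h2 hA0.le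
  have h4 : (i.1:ℤ) * D 1 ≤ (d:ℤ) * e := mul_le_mul hi hD1r.le hD1l hdZ
  have h5 : (0:ℤ) ≤ (d:ℤ) * e := mul_nonneg hdZ heZ
  have h6 : (0:ℤ) ≤ (d:ℤ) * d * A := by positivity
  constructor
  · linarith
  · linarith

theorem statement15 (d e : ℕ) (hd : 1 ≤ d) (he : 1 ≤ e) (α : ℝ) (hα : 0 < α) :
    Finite (Quotient (polySetoid d e α)) := by
  have he' : (0:ℤ) < e := by exact_mod_cast he
  set M : ℤ := (d:ℤ) * e + d * d * ⌈α⌉ with hM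
  have key : ∀ p : PolySet d α, 0 ≤ (canon e hd p).1 ⟨1, by omega⟩ ∧
      (canon e hd p).1 ⟨1, by omega⟩ < e := by
    intro p
    rw [canon_one e hd p]
    exact ⟨Int.emod_nonneg _ he'.ne', Int.emod_lt_of_pos _ he'⟩
  have wd : ∀ p q : PolySet d α, polyRel d e α p q →
      (fun i : Fin (d+1) => ((canon e hd p).1 i : ℤ)) = fun i => (canon e hd q).1 i := by
    intro p q hpq
    rw [canon_eq hd he p q hpq]
  let F : Quotient (polySetoid d e α) → (Fin (d+1) → (Set.Icc (-M) M)) :=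
    Quotient.lift
      (fun p i => ⟨(canon e hd p).1 i, Set.mem_Icc.mpr
        (poly_bound hd he hα (canon e hd p) (key p).1 (key p).2 i)⟩)
      (by
        intro p q hpq
        funext i
        exact Subtype.ext (congrFun (wd p q hpq) i))
  have hinj : Function.Injective F := by
    intro x y
    induction x using Quotient.ind
    induction y using Quotient.ind
    rename_i p q
    intro h
    apply Quotient.sound
    have hcanon : canon e hd p = canon e hd q := by
      apply Subtype.ext
      funext i
      exact congrArg Subtype.val (congrFun h i)
    have h1 : polyRel d e α p (canon e hd p) := rel_canon hd p
    have h2 : polyRel d e α q (canon e hd q) := rel_canon hd q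
    rw [hcanon] at h1
    exact (polyRel_equivalence d e α).trans h1 ((polyRel_equivalence d e α).symm h2)
  exact Finite.of_injective F hinj
end
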